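/- For r < 0 and z ∈ ℝ, let f_r(z) = (z - r)/(z·(z² - 10z + 1)·(z² + (2/3)z + 1)), and let B = 5 - 2√6 and C = 5 + 2√6 (so that B·C = 1). Then for every r < 0, ∫_{-∞}^r √|f_r(z)| dz + ∫_C^{+∞} √|f_r(z)| dz = √(-r) · ∫_{1/r}^B √( |y - 1/r| / ( |y - B|·|y - C|·(y² + (2/3)y + 1) ) ) dy, all integrals being convergent. -/

import Mathlib

open MeasureTheory

/-- The density of the quadratic differential `q_r = f_r(z) dz²` for a parameter `r < 0`:
`f_r(z) = (z - r)/(z (z² - 10z + 1)(z² + (2/3)z + 1))`. -/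
noncomputable def fQD (r z : ℝ) : ℝ :=
  (z - r) / (z * (z ^ 2 - 10 * z + 1) * (z ^ 2 + (2/3) * z + 1))

/-- `B = 5 - 2√6`, the smaller root of `z² - 10z + 1`. -/
noncomputable def Broot : ℝ := 5 - 2 * Real.sqrt 6

/-- `C = 5 + 2√6`, the larger root of `z² - 10z + 1`. -/
noncomputable def Croot : ℝ := 5 + 2 * Real.sqrt 6

/-!
Under `z = 1/y`, the interval `(1/r, 0)` goes onto `(-∞, r)` and `(0, B)` onto `(C, ∞)` because
`1/B = C`, so the two tails together are the image of `(1/r, B) \ {0}`. Clearing denominators gives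
`|f_r(1/y)| = y⁴ |r| g(y)` with `g` the transformed density, and the Jacobian `y⁻²` cancels
`√(y⁴) = y²`. Near `B` one has `g(y) ≤ (9/8)(B - 1/r)/(B - y)`, because `C - y ≥ C - B ≥ 1` and
`y² + (2/3)y + 1 ≥ 8/9`, so `√g` is integrable on `(1/r, B)`.
-/

open Set Real

section InvChangeOfVariables

variable {E : Type*} [NormedAddCommGroup E] [NormedSpace ℝ E] {s : Set ℝ}

lemma image_inv_Ioo_diff_zero {a b : ℝ} (ha : a < 0) (hb : 0 < b) :
    Inv.inv '' (Ioo a b \ {0}) = Iio a⁻¹ ∪ Ioi b⁻¹ := by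
  rw [image_inv_eq_inv]
  ext z
  simp only [mem_inv, mem_sdiff, mem_Ioo, mem_singleton_iff, inv_eq_zero, mem_union, mem_Iio,
    mem_Ioi]
  rcases lt_trichotomy z 0 with hz | rfl | hz
  · have hb' : ¬b⁻¹ < z := (hz.trans (inv_pos.2 hb)).not_gt
    simp [lt_inv_of_neg ha hz, hz.ne, (inv_lt_zero.2 hz).trans hb, hb']
  · simp [ha.le, hb.le]
  · have ha' : ¬z < a⁻¹ := ((inv_lt_zero.2 ha).trans hz).not_gt
    simp [inv_lt_comm₀ hz hb, hz.ne', ha.trans (inv_pos.2 hz), ha']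

lemma integrableOn_image_inv_iff (hs : MeasurableSet s) (h0 : (0 : ℝ) ∉ s) (g : ℝ → E) :
    IntegrableOn g (Inv.inv '' s) ↔ IntegrableOn (fun y ↦ (y ^ 2)⁻¹ • g y⁻¹) s := by
  rw [integrableOn_image_iff_integrableOn_abs_deriv_smul hs
    (fun y hy ↦ (hasDerivAt_inv (ne_of_mem_of_not_mem hy h0)).hasDerivWithinAt)
    inv_injective.injOn g]
  simp only [abs_neg, abs_inv, abs_sq]

lemma integral_image_inv (hs : MeasurableSet s) (h0 : (0 : ℝ) ∉ s) (g : ℝ → E) :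
    ∫ z in Inv.inv '' s, g z = ∫ y in s, (y ^ 2)⁻¹ • g y⁻¹ := by
  rw [integral_image_eq_integral_abs_deriv_smul hs
    (fun y hy ↦ (hasDerivAt_inv (ne_of_mem_of_not_mem hy h0)).hasDerivWithinAt)
    inv_injective.injOn g]
  simp only [abs_neg, abs_inv, abs_sq]

end InvChangeOfVariables

lemma integrableOn_inv_sqrt_sub (a b : ℝ) : IntegrableOn (fun y ↦ (√(b - y))⁻¹) (Ioo a b) := by
  rcases le_or_gt b a with hba | hab
  · simp [Ioo_eq_empty_of_le hba]
  have h : IntervalIntegrable (fun y ↦ (b - y) ^ (-(1 / 2) : ℝ)) volume a b := by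
    simpa using (intervalIntegral.intervalIntegrable_rpow' (a := b - a) (b := 0)
      (r := -(1 / 2)) (by norm_num)).comp_sub_left b
  refine ((intervalIntegrable_iff_integrableOn_Ioo_of_le hab.le).1 h).congr_fun
    (fun y hy ↦ ?_) measurableSet_Ioo
  simp only [rpow_neg (sub_pos.2 hy.2).le, sqrt_eq_rpow]

lemma Broot_pos : 0 < Broot := by
  have h6 : √6 ^ 2 = 6 := sq_sqrt (by norm_num)
  unfold Broot; nlinarith [sqrt_nonneg 6]

lemma Broot_add_one_le_Croot : Broot + 1 ≤ Croot := by
  have : 1 ≤ √6 := one_le_sqrt.2 (by norm_num)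
  unfold Broot Croot; linarith

lemma Broot_inv : Broot⁻¹ = Croot := by
  rw [inv_eq_of_mul_eq_one_right]
  unfold Broot Croot
  linear_combination (-4 : ℝ) * sq_sqrt (show (0 : ℝ) ≤ 6 by norm_num)

lemma sq_sub_ten_mul_add_one (y : ℝ) : y ^ 2 - 10 * y + 1 = (y - Broot) * (y - Croot) := by
  unfold Broot Croot
  linear_combination (4 : ℝ) * sq_sqrt (show (0 : ℝ) ≤ 6 by norm_num)

lemma eight_ninths_le_quadratic (y : ℝ) : 8 / 9 ≤ y ^ 2 + (2/3) * y + 1 := by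
  nlinarith [sq_nonneg (y + 1/3)]

noncomputable def transformedDensity (r y : ℝ) : ℝ :=
  |y - 1/r| / (|y - Broot| * |y - Croot| * (y ^ 2 + (2/3) * y + 1))

-- Valid for every `y`: where `y = 0` or a denominator vanishes, both sides are `0` since `x / 0 = 0`.
lemma fQD_inv (r y : ℝ) :
    fQD r y⁻¹ = y ^ 4 * (1 - r * y) / ((y - Broot) * (y - Croot) * (y ^ 2 + (2/3) * y + 1)) := by
  rcases eq_or_ne y 0 with rfl | hy
  · simp [fQD]
  have hden : y⁻¹ * (y⁻¹ ^ 2 - 10 * y⁻¹ + 1) * (y⁻¹ ^ 2 + (2/3) * y⁻¹ + 1) =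
      (y - Broot) * (y - Croot) * (y ^ 2 + (2/3) * y + 1) * (y ^ 5)⁻¹ := by
    rw [← sq_sub_ten_mul_add_one]; field_simp; ring
  rw [fQD, hden, div_mul_eq_div_div, div_inv_eq_mul]
  field_simp

lemma abs_fQD_inv {r : ℝ} (hr : r ≠ 0) (y : ℝ) :
    |fQD r y⁻¹| = y ^ 4 * |r| * transformedDensity r y := by
  have hnum : 1 - r * y = r * (1/r - y) := by field_simp
  have hQ : 0 < y ^ 2 + (2/3) * y + 1 := by linarith [eight_ninths_le_quadratic y]
  rw [fQD_inv, transformedDensity, hnum, abs_div, abs_mul, abs_mul, abs_mul, abs_mul,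
    abs_of_pos hQ, abs_of_nonneg (by positivity : (0 : ℝ) ≤ y ^ 4), abs_sub_comm (1/r)]
  ring

lemma inv_sq_mul_sqrt_abs_fQD_inv {r : ℝ} (hr : r ≠ 0) {y : ℝ} (hy : y ≠ 0) :
    (y ^ 2)⁻¹ * √|fQD r y⁻¹| = √|r| * √(transformedDensity r y) := by
  rw [abs_fQD_inv hr, sqrt_mul (by positivity), sqrt_mul (by positivity),
    show y ^ 4 = (y ^ 2) ^ 2 by ring, sqrt_sq (sq_nonneg y), mul_assoc,
    inv_mul_cancel_left₀ (pow_ne_zero 2 hy)]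

lemma transformedDensity_le {r y : ℝ} (hy : y ∈ Ioo (1/r) Broot) :
    transformedDensity r y ≤ 9/8 * (Broot - 1/r) / (Broot - y) := by
  obtain ⟨hry, hyB⟩ := hy
  have hBy : 0 < Broot - y := sub_pos.2 hyB
  have hCy : 1 ≤ Croot - y := by linarith [Broot_add_one_le_Croot]
  rw [transformedDensity, abs_of_pos (sub_pos.2 hry), abs_sub_comm, abs_of_pos hBy,
    abs_sub_comm, abs_of_pos (by linarith)]
  calc (y - 1/r) / ((Broot - y) * (Croot - y) * (y ^ 2 + (2/3) * y + 1))
      ≤ (Broot - 1/r) / ((Broot - y) * 1 * (8/9)) := by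
        gcongr
        · linarith
        · exact eight_ninths_le_quadratic y
    _ = 9/8 * (Broot - 1/r) / (Broot - y) := by field_simp

lemma integrableOn_sqrt_transformedDensity (r : ℝ) :
    IntegrableOn (fun y ↦ √(transformedDensity r y)) (Ioo (1/r) Broot) := by
  refine ((integrableOn_inv_sqrt_sub (1/r) Broot).const_mul √(9/8 * (Broot - 1/r))).mono'
    (by unfold transformedDensity; fun_prop : Measurable _).aestronglyMeasurable ?_
  filter_upwards [ae_restrict_mem measurableSet_Ioo] with y hy
  rw [norm_of_nonneg (sqrt_nonneg _), ← div_eq_mul_inv, ← sqrt_div' _ (sub_pos.2 hy.2).le]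
  exact sqrt_le_sqrt (transformedDensity_le hy)

/-- Change of variable `z = 1/y`: for every `r < 0`, the two tails
`∫_{-∞}^r √|f_r|` and `∫_C^{+∞} √|f_r|` are integrable, the transformed integrand is
integrable on `(1/r, B)`, and
`∫_{-∞}^r √|f_r| + ∫_C^{+∞} √|f_r| = √(-r) ∫_{1/r}^B √(|y-1/r|/(|y-B||y-C|(y²+(2/3)y+1))) dy`. -/
theorem tails_eq_transformed_integral :
    ∀ r < (0 : ℝ),
      IntegrableOn (fun z => Real.sqrt |fQD r z|) (Set.Iio r) ∧
      IntegrableOn (fun z => Real.sqrt |fQD r z|) (Set.Ioi Croot) ∧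
      IntegrableOn
        (fun y => Real.sqrt (|y - 1/r| / (|y - Broot| * |y - Croot| * (y ^ 2 + (2/3) * y + 1))))
        (Set.Ioo (1/r) Broot) ∧
      (∫ z in Set.Iio r, Real.sqrt |fQD r z|) + (∫ z in Set.Ioi Croot, Real.sqrt |fQD r z|) =
        Real.sqrt (-r) *
          ∫ y in Set.Ioo (1/r) Broot,
            Real.sqrt (|y - 1/r| /
              (|y - Broot| * |y - Croot| * (y ^ 2 + (2/3) * y + 1))) := by
  intro r hr
  set s := Ioo (1/r) Broot \ {0}
  have hs : MeasurableSet s := measurableSet_Ioo.diff (measurableSet_singleton 0)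
  have h0 : (0 : ℝ) ∉ s := fun h ↦ h.2 rfl
  have himage : Inv.inv '' s = Iio r ∪ Ioi Croot := by
    rw [image_inv_Ioo_diff_zero (one_div_neg.2 hr) Broot_pos, one_div, inv_inv, Broot_inv]
  have hs_ae : s =ᵐ[volume] Ioo (1/r) Broot := sdiff_null_ae_eq_self (measure_singleton 0)
  have hchange : EqOn (fun y ↦ (y ^ 2)⁻¹ • √|fQD r y⁻¹|)
      (fun y ↦ √(-r) * √(transformedDensity r y)) s := fun y hy ↦ by
    dsimp only
    rw [smul_eq_mul, inv_sq_mul_sqrt_abs_fQD_inv hr.ne hy.2, abs_of_neg hr]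
  have hg := integrableOn_sqrt_transformedDensity r
  have htails : IntegrableOn (fun z ↦ √|fQD r z|) (Iio r ∪ Ioi Croot) := by
    rw [← himage, integrableOn_image_inv_iff hs h0]
    exact (IntegrableOn.congr_set_ae (hg.const_mul _) hs_ae).congr_fun hchange.symm hs
  obtain ⟨hleft, hright⟩ := integrableOn_union.1 htails
  refine ⟨hleft, hright, hg, ?_⟩
  have hdisj : Disjoint (Iio r) (Ioi Croot) :=
    Iio_disjoint_Ioi_of_le (by linarith [Broot_pos, Broot_add_one_le_Croot])
  rw [← setIntegral_union hdisj measurableSet_Ioi hleft hright, ← himage,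
    integral_image_inv hs h0, setIntegral_congr_fun hs hchange, integral_const_mul,
    setIntegral_congr_set hs_ae]
  rfl
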